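/- Suppose U is an ultrafilter on ω with the property: every monotone cofinal map h : U → W (W an ultrafilter) is, on some cofinal D ⊆ U, generated by a level-preserving monotone finitary map ĥ : D' → 2^{<ω} (where D' = {X↾k_m : X ∈ D, m < ω}) via h(X) = ⋃_m ĥ(X↾k_m). Then the Tukey type of U, and of every V ≤_T U, has cardinality at most continuum; in particular there are at most continuum many ultrafilters Tukey reducible to U. -/

import Mathlib

/-- The characteristic function of `X ∩ k` with domain `k`. -/
noncomputable def restr (X : Set ℕ) (k : ℕ) : List Bool :=
  (List.range k).map (fun i => @decide (i ∈ X) (Classical.propDecidable _))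

/-- `s ⊆ t` as characteristic functions of sets. -/
def lsubset (s t : List Bool) : Prop :=
  ∀ i, s.getD i false = true → t.getD i false = true

/-- The set `{X↾k_m : X ∈ 𝒟, m < ω}`. -/
def levelsOf (k : ℕ → ℕ) (𝒟 : Set (Set ℕ)) : Set (List Bool) :=
  {s | ∃ X ∈ 𝒟, ∃ m, s = restr X (k m)}

/-- `fh` generates `f` on `𝒟`: `f(X) = ⋃_m fh(X↾k_m)` for each `X ∈ 𝒟`. -/
def GeneratesOn (k : ℕ → ℕ) (fh : List Bool → List Bool)
    (f : Set ℕ → Set ℕ) (𝒟 : Set (Set ℕ)) : Prop :=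
  ∀ X ∈ 𝒟, f X = {i | ∃ m, (fh (restr X (k m))).getD i false = true}

/-- `C` is a cofinal subset (filter base) of the ultrafilter `U`. -/
def IsCofinalSub (U : Ultrafilter ℕ) (C : Set (Set ℕ)) : Prop :=
  (∀ X ∈ C, X ∈ U) ∧ ∀ X ∈ U, ∃ Y ∈ C, Y ⊆ X

/-- `f` is a cofinal map from `U` to `V`. -/
def IsCofinalMap (U V : Ultrafilter ℕ) (f : Set ℕ → Set ℕ) : Prop :=
  ∀ C : Set (Set ℕ), IsCofinalSub U C → IsCofinalSub V (f '' C)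

/-- `f` is monotone on `U`. -/
def MonotoneOnU (U : Ultrafilter ℕ) (f : Set ℕ → Set ℕ) : Prop :=
  ∀ X Y : Set ℕ, X ∈ U → Y ∈ U → Y ⊆ X → f Y ⊆ f X

/-- `V ≤_T U`. -/
def TukeyLEU (V U : Ultrafilter ℕ) : Prop := ∃ f, IsCofinalMap U V f

/-- `V ≡_T U`. -/
def TukeyEquivU (V U : Ultrafilter ℕ) : Prop := TukeyLEU V U ∧ TukeyLEU U V

/-!
A Tukey reduction `V ≤_T U` can be taken monotone, and then the hypothesis turns it into a
finitary map `fh : 2^{<ω} → 2^{<ω}` acting on the levels `k` of a tree `T = levelsOf k 𝒟`.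
The triple `(k, fh, T)` determines `V`: by monotonicity of `fh`, `V` consists of the supersets of
the sets `⋃ₘ fh(X↾kₘ)` with `X ∈ U` and all `X↾kₘ ∈ T`. There are only continuum many such
triples, so at most continuum many `V ≤_T U`, and the Tukey types are subsets of this family.
-/

lemma restr_getD_eq_true_iff (X : Set ℕ) (k i : ℕ) :
    (restr X k).getD i false = true ↔ i < k ∧ i ∈ X := by
  unfold restr
  rcases lt_or_ge i k with hik | hik
  · simp [List.getD_eq_getElem?_getD, hik]
  · rw [List.getD_eq_default _ _ (by simpa using hik)]
    simp only [Bool.false_eq_true, false_iff, not_and]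
    omega

lemma lsubset_restr_of_subset {X Y : Set ℕ} (hYX : Y ⊆ X) (k : ℕ) :
    lsubset (restr Y k) (restr X k) := by
  intro i hi
  rw [restr_getD_eq_true_iff] at hi ⊢
  exact ⟨hi.1, hYX hi.2⟩

lemma TukeyLEU.trans {W V U : Ultrafilter ℕ} (hWV : TukeyLEU W V) (hVU : TukeyLEU V U) :
    TukeyLEU W U := by
  obtain ⟨f, hf⟩ := hWV
  obtain ⟨g, hg⟩ := hVU
  refine ⟨f ∘ g, fun C hC => ?_⟩
  rw [Set.image_comp]
  exact hf _ (hg C hC)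

lemma isCofinalSub_self (U : Ultrafilter ℕ) : IsCofinalSub U {X | X ∈ U} :=
  ⟨fun _ hX => hX, fun X hX => ⟨X, hX, subset_rfl⟩⟩

namespace IsCofinalMap

variable {U V : Ultrafilter ℕ} {f : Set ℕ → Set ℕ}

lemma mem_of_mem (hf : IsCofinalMap U V f) {X : Set ℕ} (hX : X ∈ U) : f X ∈ V :=
  (hf _ (isCofinalSub_self U)).1 _ ⟨X, hX, rfl⟩

/-- Otherwise the `Z ∈ U` with `f Z ⊈ A` would be cofinal in `U` while their images avoid `A`. -/
lemma exists_mem_forall_image_subset (hf : IsCofinalMap U V f) {A : Set ℕ} (hA : A ∈ V) :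
    ∃ Y ∈ U, ∀ Z ∈ U, Z ⊆ Y → f Z ⊆ A := by
  by_contra! hcon
  have hC : IsCofinalSub U {Z | Z ∈ U ∧ ¬ f Z ⊆ A} := by
    refine ⟨fun Z hZ => hZ.1, fun Y hY => ?_⟩
    obtain ⟨Z, hZU, hZY, hZA⟩ := hcon Y hY
    exact ⟨Z, ⟨hZU, hZA⟩, hZY⟩
  obtain ⟨-, ⟨Z, hZ, rfl⟩, hZA⟩ := (hf _ hC).2 A hA
  exact hZ.2 hZA

end IsCofinalMap

def monotoneHull (U : Ultrafilter ℕ) (f : Set ℕ → Set ℕ) (X : Set ℕ) : Set ℕ :=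
  {i | ∃ Z ∈ U, Z ⊆ X ∧ i ∈ f Z}

lemma monotoneOnU_monotoneHull (U : Ultrafilter ℕ) (f : Set ℕ → Set ℕ) :
    MonotoneOnU U (monotoneHull U f) := by
  rintro X Y - - hYX i ⟨Z, hZU, hZY, hiZ⟩
  exact ⟨Z, hZU, hZY.trans hYX, hiZ⟩

lemma IsCofinalMap.monotoneHull {U V : Ultrafilter ℕ} {f : Set ℕ → Set ℕ}
    (hf : IsCofinalMap U V f) : IsCofinalMap U V (monotoneHull U f) := by
  intro C hC
  constructor
  · rintro - ⟨X, hXC, rfl⟩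
    exact Filter.mem_of_superset (hf.mem_of_mem (hC.1 X hXC))
      fun i hi => ⟨X, hC.1 X hXC, subset_rfl, hi⟩
  · intro A hA
    obtain ⟨Y, hYU, hYA⟩ := hf.exists_mem_forall_image_subset hA
    obtain ⟨X, hXC, hXY⟩ := hC.2 Y hYU
    refine ⟨_, ⟨X, hXC, rfl⟩, ?_⟩
    rintro i ⟨Z, hZU, hZX, hiZ⟩
    exact hYA Z hZU (hZX.trans hXY) hiZ

lemma TukeyLEU.exists_monotoneOnU {U V : Ultrafilter ℕ} (hVU : TukeyLEU V U) :
    ∃ g, MonotoneOnU U g ∧ IsCofinalMap U V g :=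
  let ⟨f, hf⟩ := hVU
  ⟨monotoneHull U f, monotoneOnU_monotoneHull U f, hf.monotoneHull⟩

def generatedSets (U : Ultrafilter ℕ) (k : ℕ → ℕ) (fh : List Bool → List Bool)
    (T : Set (List Bool)) : Set (Set ℕ) :=
  {A | ∃ X ∈ U, (∀ m, restr X (k m) ∈ T) ∧
    {i | ∃ m, (fh (restr X (k m))).getD i false = true} ⊆ A}

/-- Monotonicity of `fh` lets any `X ∈ U` whose restrictions all lie in `levelsOf k 𝒟` be
replaced by some `Y ∈ 𝒟` below it. -/
lemma IsCofinalMap.mem_iff_mem_generatedSets {U V : Ultrafilter ℕ} {g : Set ℕ → Set ℕ}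
    (hg : IsCofinalMap U V g) {𝒟 : Set (Set ℕ)} {k : ℕ → ℕ} {fh : List Bool → List Bool}
    (h𝒟 : IsCofinalSub U 𝒟)
    (hfh : ∀ s ∈ levelsOf k 𝒟, ∀ t ∈ levelsOf k 𝒟, lsubset s t → lsubset (fh s) (fh t))
    (hgen : GeneratesOn k fh g 𝒟) (A : Set ℕ) :
    A ∈ V ↔ A ∈ generatedSets U k fh (levelsOf k 𝒟) := by
  have hg𝒟 := hg 𝒟 h𝒟
  constructor
  · intro hA
    obtain ⟨-, ⟨Y, hY𝒟, rfl⟩, hYA⟩ := hg𝒟.2 A hA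
    exact ⟨Y, h𝒟.1 Y hY𝒟, fun m => ⟨Y, hY𝒟, m, rfl⟩, hgen Y hY𝒟 ▸ hYA⟩
  · rintro ⟨X, hXU, hXT, hXA⟩
    obtain ⟨Y, hY𝒟, hYX⟩ := h𝒟.2 X hXU
    refine Filter.mem_of_superset (hg𝒟.1 _ ⟨Y, hY𝒟, rfl⟩) ?_
    rw [hgen Y hY𝒟]
    rintro i ⟨m, him⟩
    exact hXA ⟨m, hfh _ ⟨Y, hY𝒟, m, rfl⟩ _ (hXT m) (lsubset_restr_of_subset hYX (k m)) i him⟩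

lemma mk_tukeyLEU_le_continuum (U : Ultrafilter ℕ)
    (h : ∀ (W : Ultrafilter ℕ) (f : Set ℕ → Set ℕ),
      MonotoneOnU U f → IsCofinalMap U W f →
      ∃ (𝒟 : Set (Set ℕ)) (k : ℕ → ℕ) (fh : List Bool → List Bool),
        IsCofinalSub U 𝒟 ∧
        (∀ s ∈ levelsOf k 𝒟, ∀ t ∈ levelsOf k 𝒟,
          lsubset s t → lsubset (fh s) (fh t)) ∧
        GeneratesOn k fh f 𝒟) :
    Cardinal.mk {V : Ultrafilter ℕ // TukeyLEU V U} ≤ Cardinal.continuum := by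
  let decode : (ℕ → ℕ) × (List Bool → List Bool) × Set (List Bool) → Set (Set ℕ) :=
    fun c => generatedSets U c.1 c.2.1 c.2.2
  have hdecode (V : {V : Ultrafilter ℕ // TukeyLEU V U}) : {A | A ∈ V.1} ∈ Set.range decode := by
    obtain ⟨g, hgmono, hg⟩ := V.2.exists_monotoneOnU
    obtain ⟨𝒟, k, fh, h𝒟, hfh, hgen⟩ := h V g hgmono hg
    exact ⟨(k, fh, levelsOf k 𝒟),
      Set.ext fun A => (hg.mem_iff_mem_generatedSets h𝒟 hfh hgen A).symm⟩
  have hinj : Function.Injective fun V => (⟨_, hdecode V⟩ : Set.range decode) := by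
    intro V W hVW
    exact Subtype.ext (Ultrafilter.ext fun A => Set.ext_iff.1 (congrArg Subtype.val hVW) A)
  calc Cardinal.mk {V : Ultrafilter ℕ // TukeyLEU V U}
      ≤ Cardinal.mk (Set.range decode) := Cardinal.mk_le_of_injective hinj
    _ ≤ Cardinal.mk ((ℕ → ℕ) × (List Bool → List Bool) × Set (List Bool)) := Cardinal.mk_range_le
    _ = Cardinal.continuum := by simp [Cardinal.mk_prod, Cardinal.mk_set]

/-- If every monotone cofinal map on `U` is generated, on some cofinal `𝒟 ⊆ U`, by a
level-preserving monotone finitary map on `D' = {X↾k_m : X ∈ 𝒟}`, then the Tukey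
type of `U`, and of every `V ≤_T U`, has cardinality at most continuum; in
particular, at most continuum many ultrafilters are Tukey reducible to `U`. -/
theorem tukey_type_le_continuum (U : Ultrafilter ℕ)
    (h : ∀ (W : Ultrafilter ℕ) (f : Set ℕ → Set ℕ),
      MonotoneOnU U f → IsCofinalMap U W f →
      ∃ (𝒟 : Set (Set ℕ)) (k : ℕ → ℕ) (fh : List Bool → List Bool),
        IsCofinalSub U 𝒟 ∧ StrictMono k ∧
        (∀ s ∈ levelsOf k 𝒟, ∀ m, s.length = k m → (fh s).length = m) ∧
        (∀ s ∈ levelsOf k 𝒟, ∀ t ∈ levelsOf k 𝒟,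
          lsubset s t → lsubset (fh s) (fh t)) ∧
        GeneratesOn k fh f 𝒟) :
    Cardinal.mk {V : Ultrafilter ℕ // TukeyEquivU V U} ≤ Cardinal.continuum ∧
    (∀ V : Ultrafilter ℕ, TukeyLEU V U →
      Cardinal.mk {W : Ultrafilter ℕ // TukeyEquivU W V} ≤ Cardinal.continuum) ∧
    Cardinal.mk {V : Ultrafilter ℕ // TukeyLEU V U} ≤ Cardinal.continuum := by
  have hle := mk_tukeyLEU_le_continuum U fun W f hf hfW =>
    let ⟨𝒟, k, fh, h𝒟, _, _, hfh, hgen⟩ := h W f hf hfW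
    ⟨𝒟, k, fh, h𝒟, hfh, hgen⟩
  refine ⟨?_, fun V hVU => ?_, hle⟩
  · exact (Cardinal.mk_subtype_mono fun V hV => hV.1).trans hle
  · exact (Cardinal.mk_subtype_mono fun W hW => hW.1.trans hVU).trans hle
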